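/- Let β > 0, E > 0, q = exp(−β·E), and τ_j = q^j/(1+q+q²) for j = 0,1,2. For the qutrit input distribution p = (τ_1, τ_0, τ_2) (a state with no well-defined effective temperature), the maximum over all energy-preserving collisions of the output ground-state population equals τ_0 + τ_1·(τ_0 − τ_1); that is, there exists a unitary U indexed by (Fin 3) × (Fin 3) commuting with H_{(k,j)} = (k+j)·E with Σ_j (U·D·U†)_{(0,j),(0,j)} = τ_0 + τ_1·(τ_0 − τ_1), no such U achieves a larger value, and τ_0 + τ_1·(τ_0 − τ_1) > τ_0. (The paper's explicit example of cooling below the bath temperature by a single collision with a molecule no larger than the system.) -/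

import Mathlib

/-!
An energy-preserving unitary is block diagonal with respect to the energy shells, so row `(0, j)`
of `U` is a unit vector supported on the shell `k + j' = j`, and the output population of
`(0, j)` is a convex combination of the input weights `p k * τ j'` on that shell, hence at most
the largest of them. For `p = (τ₁, τ₀, τ₂)` these maxima are `τ₁τ₀`, `τ₀²`, `τ₀τ₁`, and the
permutation `(0,1) ↔ (1,0)`, `(0,2) ↔ (1,1)` moves all three into row `0` at once. Their sum is
`τ₀ + τ₁(τ₀ − τ₁)` because `τ₀τ₂ = τ₁²` and `τ₀ + τ₁ + τ₂ = 1`.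
-/

open Matrix

namespace Matrix

variable {n : Type*} [Fintype n] [DecidableEq n]

theorem mul_diagonal_mul_conjTranspose_apply_self (V : Matrix n n ℂ) (w : n → ℝ) (a : n) :
    (V * diagonal (fun i => (w i : ℂ)) * Vᴴ) a a =
      ((∑ b, Complex.normSq (V a b) * w b : ℝ) : ℂ) := by
  rw [mul_apply]
  simp only [mul_diagonal, conjTranspose_apply, Complex.ofReal_sum, Complex.ofReal_mul]
  refine Finset.sum_congr rfl fun b _ => ?_
  rw [← Complex.mul_conj, Complex.star_def]
  ring

theorem sum_normSq_apply_eq_one_of_mem_unitaryGroup {U : Matrix n n ℂ}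
    (hU : U ∈ unitaryGroup n ℂ) (a : n) : ∑ b, Complex.normSq (U a b) = 1 := by
  have h := mul_diagonal_mul_conjTranspose_apply_self U 1 a
  simp only [Pi.one_apply, Complex.ofReal_one, diagonal_one, mul_one] at h
  rw [← star_eq_conjTranspose, mem_unitaryGroup_iff.mp hU, one_apply_eq] at h
  exact_mod_cast h.symm

theorem apply_eq_zero_of_mul_diagonal_eq {R : Type*} [CommRing R] [NoZeroDivisors R]
    {U : Matrix n n R} {d : n → R} (h : U * diagonal d = diagonal d * U) {a b : n}
    (hab : d a ≠ d b) : U a b = 0 := by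
  have hab' := congrFun (congrFun h a) b
  rw [mul_diagonal, diagonal_mul] at hab'
  have : (d b - d a) * U a b = 0 := by linear_combination hab'
  exact (mul_eq_zero.mp this).resolve_left (sub_ne_zero.mpr (Ne.symm hab))

theorem re_mul_diagonal_mul_conjTranspose_apply_self_le {U : Matrix n n ℂ}
    (hU : U ∈ unitaryGroup n ℂ) {d : n → ℂ} (hd : U * diagonal d = diagonal d * U)
    (w : n → ℝ) (a : n) {m : ℝ} (hm : ∀ b, d b = d a → w b ≤ m) :
    ((U * diagonal (fun i => (w i : ℂ)) * Uᴴ) a a).re ≤ m := by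
  rw [mul_diagonal_mul_conjTranspose_apply_self, Complex.ofReal_re]
  calc ∑ b, Complex.normSq (U a b) * w b ≤ ∑ b, Complex.normSq (U a b) * m := by
        refine Finset.sum_le_sum fun b _ => ?_
        by_cases hb : d b = d a
        · exact mul_le_mul_of_nonneg_left (hm b hb) (Complex.normSq_nonneg _)
        · rw [apply_eq_zero_of_mul_diagonal_eq hd (Ne.symm hb), map_zero, zero_mul, zero_mul]
    _ = m := by rw [← Finset.sum_mul, sum_normSq_apply_eq_one_of_mem_unitaryGroup hU, one_mul]

theorem permMatrix_mem_unitaryGroup {R : Type*} [CommRing R] [StarRing R] (σ : Equiv.Perm n) :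
    σ.permMatrix R ∈ unitaryGroup n R := by
  rw [mem_unitaryGroup_iff, star_eq_conjTranspose, conjTranspose_permMatrix, ← permMatrix_mul,
    inv_mul_cancel, permMatrix_one]

theorem permMatrix_mul_mul_permMatrix_inv {R : Type*} [NonAssocSemiring R] (σ : Equiv.Perm n)
    (M : Matrix n n R) : σ.permMatrix R * M * σ⁻¹.permMatrix R = M.submatrix σ σ := by
  rw [PEquiv.toMatrix_toPEquiv_mul, PEquiv.mul_toMatrix_toPEquiv]
  rfl

theorem permMatrix_mul_diagonal_eq {R : Type*} [NonAssocSemiring R] (σ : Equiv.Perm n)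
    {d : n → R} (hd : ∀ a, d (σ a) = d a) :
    σ.permMatrix R * diagonal d = diagonal d * σ.permMatrix R := by
  rw [PEquiv.toMatrix_toPEquiv_mul, PEquiv.mul_toMatrix_toPEquiv]
  ext a b
  simp only [submatrix_apply, id, diagonal_apply, Equiv.eq_symm_apply]
  grind

end Matrix

theorem exp_neg_mul_mem_Ioo {β E : ℝ} (hβ : 0 < β) (hE : 0 < E) :
    Real.exp (-β * E) ∈ Set.Ioo 0 1 :=
  ⟨Real.exp_pos _, Real.exp_lt_one_iff.mpr (by nlinarith)⟩

section GibbsQutrit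

variable {q : ℝ} {τ : Fin 3 → ℝ}

theorem gibbs_qutrit_pos_and_strictAnti (hq : q ∈ Set.Ioo 0 1)
    (hτ : ∀ j, τ j = q ^ (j : ℕ) / (1 + q + q ^ 2)) : 0 < τ 2 ∧ τ 2 < τ 1 ∧ τ 1 < τ 0 := by
  obtain ⟨hq0, hq1⟩ := hq
  have hZ : 0 < 1 + q + q ^ 2 := by positivity
  simp only [hτ, Fin.val_zero, Fin.val_one, Fin.val_two, div_lt_div_iff_of_pos_right hZ]
  exact ⟨by positivity, by nlinarith, by simpa using hq1⟩

theorem gibbs_qutrit_sq_add_mul_add_sq (hτ : ∀ j, τ j = q ^ (j : ℕ) / (1 + q + q ^ 2)) :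
    τ 0 ^ 2 + τ 0 * τ 1 + τ 1 ^ 2 = τ 0 := by
  have hZ : 1 + q + q ^ 2 ≠ 0 := by nlinarith [sq_nonneg (q + 1 / 2)]
  simp only [hτ, Fin.val_zero, Fin.val_one]
  field_simp

end GibbsQutrit

def coolingPerm : Equiv.Perm (Fin 3 × Fin 3) := Equiv.swap (0, 1) (1, 0) * Equiv.swap (0, 2) (1, 1)

theorem coolingPerm_levelSum (b : Fin 3 × Fin 3) :
    ((coolingPerm b).1 : ℕ) + (coolingPerm b).2 = b.1 + b.2 := by
  revert b; decide

theorem coolingPerm_zero (j : Fin 3) : coolingPerm (0, j) = ![(0, 0), (1, 0), (1, 1)] j := by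
  revert j; decide

theorem weight_le_coolingPerm {t : Fin 3 → ℝ} (h2 : 0 < t 2) (h21 : t 2 < t 1) (h10 : t 1 < t 0)
    {b : Fin 3 × Fin 3} {j : Fin 3} (hb : (b.1 : ℕ) + b.2 = j) :
    ![t 1, t 0, t 2] b.1 * t b.2 ≤
      ![t 1, t 0, t 2] (coolingPerm (0, j)).1 * t (coolingPerm (0, j)).2 := by
  obtain ⟨k, l⟩ := b
  fin_cases k <;> fin_cases l <;> fin_cases j <;> simp [coolingPerm_zero] at hb ⊢ <;> nlinarith

/-- The paper's explicit example of cooling below the bath temperature by a single collision: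
for the qutrit input distribution p = (τ₁, τ₀, τ₂), the maximal output ground-state
population over all energy-preserving collisions equals τ₀ + τ₁(τ₀ − τ₁) > τ₀. -/
theorem qutrit_sub_bath_cooling
    (β E : ℝ) (hβ : 0 < β) (hE : 0 < E) (q : ℝ) (hq : q = Real.exp (-β * E))
    (τ : Fin 3 → ℝ) (hτ : ∀ j, τ j = q ^ (j : ℕ) / (1 + q + q ^ 2))
    (p : Fin 3 → ℝ) (hp : p = ![τ 1, τ 0, τ 2]) :
    (∃ U : Matrix (Fin 3 × Fin 3) (Fin 3 × Fin 3) ℂ,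
      U ∈ Matrix.unitaryGroup (Fin 3 × Fin 3) ℂ ∧
      U * Matrix.diagonal
          (fun kj : Fin 3 × Fin 3 => ((((kj.1 : ℕ) + (kj.2 : ℕ)) * E : ℝ) : ℂ))
        = Matrix.diagonal
          (fun kj : Fin 3 × Fin 3 => ((((kj.1 : ℕ) + (kj.2 : ℕ)) * E : ℝ) : ℂ)) * U ∧
      ∑ j : Fin 3,
          (U * Matrix.diagonal
              (fun kj : Fin 3 × Fin 3 => ((p kj.1 * τ kj.2 : ℝ) : ℂ)) * Uᴴ)
            ((0 : Fin 3), j) ((0 : Fin 3), j)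
        = ((τ 0 + τ 1 * (τ 0 - τ 1) : ℝ) : ℂ)) ∧
    (∀ U : Matrix (Fin 3 × Fin 3) (Fin 3 × Fin 3) ℂ,
      U ∈ Matrix.unitaryGroup (Fin 3 × Fin 3) ℂ →
      U * Matrix.diagonal
          (fun kj : Fin 3 × Fin 3 => ((((kj.1 : ℕ) + (kj.2 : ℕ)) * E : ℝ) : ℂ))
        = Matrix.diagonal
          (fun kj : Fin 3 × Fin 3 => ((((kj.1 : ℕ) + (kj.2 : ℕ)) * E : ℝ) : ℂ)) * U →
      ∑ j : Fin 3,
          ((U * Matrix.diagonal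
              (fun kj : Fin 3 × Fin 3 => ((p kj.1 * τ kj.2 : ℝ) : ℂ)) * Uᴴ)
            ((0 : Fin 3), j) ((0 : Fin 3), j)).re
        ≤ τ 0 + τ 1 * (τ 0 - τ 1)) ∧
    τ 0 < τ 0 + τ 1 * (τ 0 - τ 1) := by
  subst hp hq
  obtain ⟨h2, h21, h10⟩ := gibbs_qutrit_pos_and_strictAnti (exp_neg_mul_mem_Ioo hβ hE) hτ
  set w : Fin 3 × Fin 3 → ℝ := fun kj => ![τ 1, τ 0, τ 2] kj.1 * τ kj.2
  have hopt : ∑ j : Fin 3, w (coolingPerm (0, j)) = τ 0 + τ 1 * (τ 0 - τ 1) := by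
    simp only [w, Fin.sum_univ_three, coolingPerm_zero, cons_val_zero, cons_val_one, cons_val]
    linear_combination (gibbs_qutrit_sq_add_mul_add_sq hτ)
  refine ⟨⟨coolingPerm.permMatrix ℂ, permMatrix_mem_unitaryGroup _, ?_, ?_⟩,
    fun U hU hcomm => ?_, ?_⟩
  · refine permMatrix_mul_diagonal_eq _ fun b => ?_
    rw [← Nat.cast_add, ← Nat.cast_add, coolingPerm_levelSum]
  · simp only [conjTranspose_permMatrix, permMatrix_mul_mul_permMatrix_inv, submatrix_apply,
      diagonal_apply_eq]
    exact_mod_cast hopt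
  · rw [← hopt]
    refine Finset.sum_le_sum fun j _ =>
      re_mul_diagonal_mul_conjTranspose_apply_self_le hU hcomm w _ fun b hb =>
        weight_le_coolingPerm h2 h21 h10 ?_
    have hb' := mul_right_cancel₀ hE.ne' (Complex.ofReal_injective hb)
    rw [Fin.val_zero, Nat.cast_zero, zero_add] at hb'
    exact_mod_cast hb'
  · exact lt_add_of_pos_right _ (mul_pos (h2.trans h21) (sub_pos.2 h10))
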